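/- Let H be a hypergraph. Then the following are equivalent: (1) H is a dually conformal Sperner hypergraph; (2) there exists a finite simple graph G with vertex set V(H) such that the hyperedges of H are exactly the minimal clique transversals of G. -/

import Mathlib

open Finset
open scoped Classical

variable {V : Type*} [Fintype V] [DecidableEq V]

/-- A hypergraph on vertex set `V` is given by its finite set of hyperedges `E`;
the condition that every vertex belongs to at least one hyperedge. -/
def Covers (E : Finset (Finset V)) : Prop := ∀ v : V, ∃ e ∈ E, v ∈ e

/-- A hypergraph is Sperner if no hyperedge is contained in another hyperedge. -/
def SpernerHG (E : Finset (Finset V)) : Prop := ∀ e ∈ E, ∀ f ∈ E, e ⊆ f → e = f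

/-- A transversal of a hypergraph: a set of vertices intersecting all hyperedges. -/
def IsTransversal (E : Finset (Finset V)) (T : Finset V) : Prop := ∀ e ∈ E, (e ∩ T).Nonempty

/-- A minimal transversal: a transversal not properly containing another transversal. -/
def IsMinTransversal (E : Finset (Finset V)) (T : Finset V) : Prop :=
  IsTransversal E T ∧ ∀ T' ⊆ T, IsTransversal E T' → T' = T

/-- The dual hypergraph: its hyperedges are exactly the minimal transversals. -/
noncomputable def dualHG (E : Finset (Finset V)) : Finset (Finset V) :=
  Finset.univ.filter fun T => IsMinTransversal E T

/-- The co-occurrence graph of a hypergraph: two distinct vertices are adjacent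
iff some hyperedge contains both. -/
def coocGraph (E : Finset (Finset V)) : SimpleGraph V where
  Adj u v := u ≠ v ∧ ∃ e ∈ E, u ∈ e ∧ v ∈ e
  symm := by
    constructor
    rintro u v ⟨huv, e, he, hu, hv⟩
    exact ⟨Ne.symm huv, e, he, hv, hu⟩
  loopless := by
    constructor
    rintro v ⟨hv, -⟩
    exact hv rfl

/-- A maximal clique of a graph: a clique not properly contained in any other clique. -/
def IsMaxClique (G : SimpleGraph V) (C : Finset V) : Prop :=
  G.IsClique (C : Set V) ∧ ∀ D : Finset V, G.IsClique (D : Set V) → C ⊆ D → D = C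

/-- A hypergraph is conformal if every maximal clique of its co-occurrence graph
is a hyperedge. -/
def ConformalHG (E : Finset (Finset V)) : Prop :=
  ∀ C : Finset V, IsMaxClique (coocGraph E) C → C ∈ E

/-- A hypergraph is dually conformal if its dual hypergraph is conformal. -/
def DuallyConformalHG (E : Finset (Finset V)) : Prop :=
  ConformalHG (dualHG E)

/-- A clique transversal of a graph: a set of vertices meeting all maximal cliques. -/
def IsCliqueTransversal (G : SimpleGraph V) (X : Finset V) : Prop :=
  ∀ C : Finset V, IsMaxClique G C → (C ∩ X).Nonempty

/-- A minimal clique transversal: a clique transversal not properly containing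
another clique transversal. -/
def IsMinCliqueTransversal (G : SimpleGraph V) (X : Finset V) : Prop :=
  IsCliqueTransversal G X ∧ ∀ Y ⊆ X, IsCliqueTransversal G Y → Y = X

/-- The upper clique transversal number: the maximum size of a minimal clique
transversal. -/
noncomputable def uct (G : SimpleGraph V) : ℕ :=
  (Finset.univ.filter fun X : Finset V => IsMinCliqueTransversal G X).sup Finset.card

/-! The minimal transversals of any hypergraph form a Sperner hypergraph, and a Sperner hypergraph
`H` satisfies `H^dd = H`: for `v ∈ e ∈ H`, shrinking the transversal `{v} ∪ (V \ e)` gives a minimal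
transversal meeting `e` only in `v`, so `e` is a minimal transversal of `H^d`. The minimal clique
transversals of a graph `G` form the dual of its clique hypergraph `C(G)`, which is conformal and
Sperner with co-occurrence graph `G`; conversely a conformal Sperner hypergraph is the clique
hypergraph of its co-occurrence graph. Hence `H = C(G)^d` for some `G` iff `H` is Sperner and
`H^d = C(G)` for some `G`, iff `H` is Sperner and `H^d` is conformal. -/

section Minimality

omit [Fintype V]

theorem isMinTransversal_iff_minimal {E : Finset (Finset V)} {T : Finset V} :
    IsMinTransversal E T ↔ Minimal (IsTransversal E) T :=
  ⟨fun h => ⟨h.1, fun _ hT' hle => (h.2 _ hle hT').ge⟩,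
    fun h => ⟨h.1, fun _ hle hT' => h.eq_of_le hT' hle⟩⟩

theorem IsTransversal.exists_isMinTransversal_subset {E : Finset (Finset V)} {T : Finset V}
    (hT : IsTransversal E T) : ∃ S ⊆ T, IsMinTransversal E S := by
  obtain ⟨S, hST, hS⟩ := exists_minimal_le_of_wellFoundedLT _ T hT
  exact ⟨S, hST, isMinTransversal_iff_minimal.2 hS⟩

end Minimality

section Duality

variable {E : Finset (Finset V)}

theorem mem_dualHG {T : Finset V} : T ∈ dualHG E ↔ IsMinTransversal E T := by
  simp [dualHG]

theorem spernerHG_dualHG (E : Finset (Finset V)) : SpernerHG (dualHG E) := by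
  intro S hS T hT hST
  exact (mem_dualHG.1 hT).2 S hST (mem_dualHG.1 hS).1

theorem isTransversal_dualHG_of_mem {e : Finset V} (he : e ∈ E) : IsTransversal (dualHG E) e := by
  intro T hT
  rw [inter_comm]
  exact (mem_dualHG.1 hT).1 e he

theorem isTransversal_compl_iff {S : Finset V} : IsTransversal E Sᶜ ↔ ∀ e ∈ E, ¬e ⊆ S := by
  simp only [IsTransversal, ← sdiff_eq_inter_compl, sdiff_nonempty]

theorem exists_subset_of_isTransversal_dualHG {S : Finset V} (hS : IsTransversal (dualHG E) S) :
    ∃ e ∈ E, e ⊆ S := by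
  by_contra! h
  obtain ⟨T, hTS, hT⟩ := (isTransversal_compl_iff.2 h).exists_isMinTransversal_subset
  obtain ⟨v, hv⟩ := hS T (mem_dualHG.2 hT)
  obtain ⟨hvT, hvS⟩ := mem_inter.1 hv
  exact mem_compl.1 (hTS hvT) hvS

theorem SpernerHG.exists_isMinTransversal_inter_eq_singleton (hE : SpernerHG E) {e : Finset V}
    (he : e ∈ E) {v : V} (hv : v ∈ e) : ∃ T, IsMinTransversal E T ∧ T ∩ e = {v} := by
  have hT₀ : IsTransversal E (insert v eᶜ) := by
    intro f hf
    by_cases hfe : f = e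
    · exact ⟨v, mem_inter.2 ⟨hfe ▸ hv, mem_insert_self _ _⟩⟩
    · obtain ⟨w, hwf, hwe⟩ := not_subset.1 fun hsub => hfe (hE f hf e he hsub)
      exact ⟨w, mem_inter.2 ⟨hwf, mem_insert_of_mem (mem_compl.2 hwe)⟩⟩
  obtain ⟨T, hT₀T, hT⟩ := hT₀.exists_isMinTransversal_subset
  have hTe : T ∩ e ⊆ {v} := by
    intro w hw
    obtain ⟨hwT, hwe⟩ := mem_inter.1 hw
    rcases mem_insert.1 (hT₀T hwT) with rfl | hw'
    · exact mem_singleton_self w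
    · exact absurd hwe (mem_compl.1 hw')
  obtain ⟨w, hw⟩ := hT.1 e he
  have hwv : w = v := mem_singleton.1 (hTe (by rwa [inter_comm]))
  refine ⟨T, hT, hTe.antisymm (singleton_subset_iff.2 ?_)⟩
  rw [inter_comm, ← hwv]
  exact hw

theorem SpernerHG.isMinTransversal_dualHG (hE : SpernerHG E) {e : Finset V} (he : e ∈ E) :
    IsMinTransversal (dualHG E) e := by
  refine ⟨isTransversal_dualHG_of_mem he, fun S hSe hS => hSe.antisymm fun v hv => ?_⟩
  obtain ⟨T, hT, hTe⟩ := hE.exists_isMinTransversal_inter_eq_singleton he hv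
  obtain ⟨w, hw⟩ := hS T (mem_dualHG.2 hT)
  obtain ⟨hwT, hwS⟩ := mem_inter.1 hw
  have : w ∈ T ∩ e := mem_inter.2 ⟨hwT, hSe hwS⟩
  rw [hTe, mem_singleton] at this
  exact this ▸ hwS

theorem SpernerHG.dualHG_dualHG (hE : SpernerHG E) : dualHG (dualHG E) = E := by
  ext S
  rw [mem_dualHG]
  refine ⟨fun hS => ?_, hE.isMinTransversal_dualHG⟩
  obtain ⟨e, he, heS⟩ := exists_subset_of_isTransversal_dualHG hS.1
  exact hS.2 e heS (isTransversal_dualHG_of_mem he) ▸ he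

end Duality

section Cliques

omit [DecidableEq V]

omit [Fintype V] in
theorem isMaxClique_iff_maximal {G : SimpleGraph V} {C : Finset V} :
    IsMaxClique G C ↔ Maximal (fun D : Finset V => G.IsClique (D : Set V)) C :=
  ⟨fun h => ⟨h.1, fun _ hD hle => (h.2 _ hD hle).le⟩,
    fun h => ⟨h.1, fun _ hD hle => h.eq_of_ge hD hle⟩⟩

theorem SimpleGraph.IsClique.exists_isMaxClique_superset {G : SimpleGraph V} {C : Finset V}
    (hC : G.IsClique (C : Set V)) : ∃ D, C ⊆ D ∧ IsMaxClique G D := by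
  obtain ⟨D, hCD, hD⟩ :=
    exists_maximal_ge_of_wellFoundedGT (fun D : Finset V => G.IsClique (D : Set V)) C hC
  exact ⟨D, hCD, isMaxClique_iff_maximal.2 hD⟩

noncomputable def maxCliques (G : SimpleGraph V) : Finset (Finset V) :=
  univ.filter (IsMaxClique G)

variable {G : SimpleGraph V} {E : Finset (Finset V)}

theorem mem_maxCliques {C : Finset V} : C ∈ maxCliques G ↔ IsMaxClique G C := by
  simp [maxCliques]

theorem spernerHG_maxCliques (G : SimpleGraph V) : SpernerHG (maxCliques G) := by
  intro C hC D hD hCD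
  exact (mem_maxCliques.1 hC).2 D (mem_maxCliques.1 hD).1 hCD |>.symm

omit [Fintype V] in
theorem isClique_coocGraph_of_mem {e : Finset V} (he : e ∈ E) :
    (coocGraph E).IsClique (e : Set V) :=
  fun _ hu _ hv huv => ⟨huv, e, he, hu, hv⟩

theorem SpernerHG.maxCliques_coocGraph (hE : SpernerHG E) (hconf : ConformalHG E) :
    maxCliques (coocGraph E) = E := by
  ext C
  rw [mem_maxCliques]
  refine ⟨hconf C, fun hC => ?_⟩
  obtain ⟨D, hCD, hD⟩ := (isClique_coocGraph_of_mem hC).exists_isMaxClique_superset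
  exact hE C hC D (hconf D hD) hCD ▸ hD

theorem coocGraph_maxCliques (G : SimpleGraph V) : coocGraph (maxCliques G) = G := by
  ext u v
  refine ⟨fun ⟨huv, C, hC, hu, hv⟩ => ?_, fun h => ⟨G.ne_of_adj h, ?_⟩⟩
  · exact (mem_maxCliques.1 hC).1 hu hv huv
  have hpair : G.IsClique (({u, v} : Finset V) : Set V) := by
    rw [coe_pair]
    exact SimpleGraph.isClique_pair.2 fun _ => h
  obtain ⟨D, huvD, hD⟩ := hpair.exists_isMaxClique_superset
  exact ⟨D, mem_maxCliques.2 hD, huvD (mem_insert_self u _),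
    huvD (mem_insert_of_mem (mem_singleton_self v))⟩

theorem conformalHG_maxCliques (G : SimpleGraph V) : ConformalHG (maxCliques G) := by
  intro C hC
  rw [coocGraph_maxCliques] at hC
  exact mem_maxCliques.2 hC

end Cliques

theorem isMinCliqueTransversal_iff_mem_dualHG {G : SimpleGraph V} {X : Finset V} :
    IsMinCliqueTransversal G X ↔ X ∈ dualHG (maxCliques G) := by
  simp only [mem_dualHG, IsMinTransversal, IsTransversal, IsMinCliqueTransversal,
    IsCliqueTransversal, mem_maxCliques]

theorem dually_conformal_sperner_iff_general (E : Finset (Finset V)) :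
    (SpernerHG E ∧ DuallyConformalHG E) ↔
      ∃ G : SimpleGraph V, ∀ X : Finset V, X ∈ E ↔ IsMinCliqueTransversal G X := by
  simp only [isMinCliqueTransversal_iff_mem_dualHG]
  constructor
  · rintro ⟨hE, hconf⟩
    refine ⟨coocGraph (dualHG E), fun X => ?_⟩
    rw [(spernerHG_dualHG E).maxCliques_coocGraph hconf, hE.dualHG_dualHG]
  · rintro ⟨G, hG⟩
    obtain rfl : E = dualHG (maxCliques G) := ext hG
    refine ⟨spernerHG_dualHG _, ?_⟩
    rw [DuallyConformalHG, (spernerHG_maxCliques G).dualHG_dualHG]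
    exact conformalHG_maxCliques G

/-- `H` is a dually conformal Sperner hypergraph iff there is a graph `G`
on `V(H)` whose minimal clique transversals are exactly the hyperedges of `H`. -/
theorem dually_conformal_sperner_iff [Nonempty V] (E : Finset (Finset V))
    (hcov : Covers E) :
    (SpernerHG E ∧ DuallyConformalHG E) ↔
      ∃ G : SimpleGraph V, ∀ X : Finset V, X ∈ E ↔ IsMinCliqueTransversal G X :=
  dually_conformal_sperner_iff_general E
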